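/- Let ε ≥ 0 and E ≥ 0. Let x and r_b be real numbers with r_b < x < 0, set r_a = r_b − x and k = x + Φ⁻(r_a) − Φ⁻(r_b), and assume k ≤ −1. Let ã and b̃ be reals with |ã − Φ⁻(r_a)| ≤ ε and |b̃ − Φ⁻(r_b)| ≤ ε, set k̃ = x + ã − b̃, and assume k̃ ≤ −1. Let v be a real with |v − Φ⁻(k̃)| ≤ E. Then the co-transformation output b̃ + v satisfies |Φ⁻(x) − (b̃ + v)| ≤ ε + (Φ⁻(−1 − 2ε) − Φ⁻(−1)) + E. -/
import Mathlib


/-- Φ⁻(x) = log₂(1 − 2^x) -/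
noncomputable def Phim (x : ℝ) : ℝ := Real.logb 2 (1 - (2:ℝ) ^ x)

lemma one_sub_pos_of_neg {x : ℝ} (hx : x < 0) : 0 < 1 - (2:ℝ) ^ x := by
  have := Real.rpow_lt_one_of_one_lt_of_neg (show (1:ℝ) < 2 by norm_num) hx
  linarith

lemma rpow_phim {t : ℝ} (ht : t < 0) : (2:ℝ) ^ (Phim t) = 1 - (2:ℝ) ^ t :=
  Real.rpow_logb two_pos (by norm_num) (one_sub_pos_of_neg ht)

lemma phim_cotrans {x rb : ℝ} (hrb : rb < x) (hx : x < 0) :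
    Phim (x + Phim (rb - x) - Phim rb) = Phim x - Phim rb := by
  have h1 : rb < 0 := hrb.trans hx
  have hra : rb - x < 0 := by linarith
  have hx1 := one_sub_pos_of_neg hx
  have hb1 := one_sub_pos_of_neg h1
  have ha1 := one_sub_pos_of_neg hra
  have hk2 : (2:ℝ) ^ (x + Phim (rb - x) - Phim rb)
      = (2:ℝ)^x * (1 - (2:ℝ)^(rb-x)) / (1 - (2:ℝ)^rb) := by
    rw [Real.rpow_sub two_pos, Real.rpow_add two_pos, rpow_phim hra, rpow_phim h1]
  have hprod : (2:ℝ)^x * (2:ℝ)^(rb-x) = (2:ℝ)^rb := by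
    rw [← Real.rpow_add two_pos]; ring_nf
  have h2 : 1 - (2:ℝ) ^ (x + Phim (rb - x) - Phim rb)
      = (1 - (2:ℝ)^x) / (1 - (2:ℝ)^rb) := by
    rw [hk2]; field_simp; nlinarith [hprod]
  show Real.logb 2 (1 - (2:ℝ)^(x + Phim (rb - x) - Phim rb)) = Phim x - Phim rb
  rw [h2, Real.logb_div (by positivity) (by positivity)]
  rfl

lemma phim_anti {u w : ℝ} (huw : u ≤ w) (hw : w < 0) : Phim w ≤ Phim u := by
  have hu : u < 0 := lt_of_le_of_lt huw hw
  have h2 : (2:ℝ)^u ≤ (2:ℝ)^w :=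
    (Real.rpow_le_rpow_left_iff (show (1:ℝ) < 2 by norm_num)).2 huw
  exact (Real.logb_le_logb (show (1:ℝ) < 2 by norm_num) (one_sub_pos_of_neg hw)
    (one_sub_pos_of_neg hu)).2 (by linarith)

lemma phim_diff_le {u w δ : ℝ} (hδ : 0 ≤ δ) (huw : u ≤ w) (hw : w ≤ -1)
    (hd : w - u ≤ δ) : Phim u - Phim w ≤ Phim (-1 - δ) - Phim (-1) := by
  have hw0 : w < 0 := lt_of_le_of_lt hw (by norm_num)
  have hu0 : u < 0 := lt_of_le_of_lt huw hw0
  have hδ0 : -1 - δ < 0 := by linarith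
  set a := (2:ℝ)^u with hadef
  set b := (2:ℝ)^w with hbdef
  set t := (2:ℝ)^(-δ) with htdef
  have hc : (2:ℝ)^(-1:ℝ) = 1/2 := by
    rw [Real.rpow_neg_one]; norm_num
  have hd2 : (2:ℝ)^(-1 - δ) = (1/2) * t := by
    rw [show (-1 - δ) = (-1:ℝ) + (-δ) by ring, Real.rpow_add two_pos, hc]
  have hab : b * t ≤ a := by
    rw [hadef, hbdef, htdef, ← Real.rpow_add two_pos]
    exact (Real.rpow_le_rpow_left_iff (show (1:ℝ) < 2 by norm_num)).2 (by linarith)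
  have hbc : b ≤ 1/2 := by
    rw [hbdef, ← hc]
    exact (Real.rpow_le_rpow_left_iff (show (1:ℝ) < 2 by norm_num)).2 hw
  have ht1 : t ≤ 1 := Real.rpow_le_one_of_one_le_of_nonpos (by norm_num) (by linarith)
  have htpos : 0 < t := Real.rpow_pos_of_pos two_pos _
  have hapos : 0 < a := Real.rpow_pos_of_pos two_pos _
  have hbpos : 0 < b := Real.rpow_pos_of_pos two_pos _
  have h1a : 0 < 1 - a := one_sub_pos_of_neg hu0
  have h1b : 0 < 1 - b := one_sub_pos_of_neg hw0
  have h1d : 0 < 1 - (1/2) * t := by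
    have := one_sub_pos_of_neg hδ0
    rw [hd2] at this; linarith
  have key : (1 - a) * (1 - 1/2) ≤ (1 - (1/2) * t) * (1 - b) := by
    nlinarith [mul_nonneg (sub_nonneg.2 hbc) (sub_nonneg.2 ht1)]
  have hdiv : (1 - a) / (1 - b) ≤ (1 - (1/2) * t) / (1 - 1/2) := by
    rw [div_le_div_iff₀ h1b (by norm_num)]
    linarith [key]
  unfold Phim
  rw [hc, hd2]
  rw [show Real.logb 2 (1 - a) - Real.logb 2 (1 - b)
      = Real.logb 2 ((1 - a) / (1 - b)) by
        rw [Real.logb_div (ne_of_gt h1a) (ne_of_gt h1b)],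
      show Real.logb 2 (1 - 1/2 * t) - Real.logb 2 (1 - 1/2)
      = Real.logb 2 ((1 - 1/2 * t) / (1 - 1/2)) by
        rw [Real.logb_div (ne_of_gt h1d) (by norm_num)]]
  exact (Real.logb_le_logb (by norm_num) (by positivity) (by positivity)).2 hdiv

lemma phim_abs_diff {u w δ : ℝ} (hδ : 0 ≤ δ) (hu : u ≤ -1) (hw : w ≤ -1)
    (hd : |u - w| ≤ δ) : |Phim u - Phim w| ≤ Phim (-1 - δ) - Phim (-1) := by
  rcases le_total u w with h | h
  · have h1 : Phim w ≤ Phim u := phim_anti h (lt_of_le_of_lt hw (by norm_num))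
    have h2 : w - u ≤ δ := by
      rw [abs_sub_comm] at hd; exact le_trans (le_abs_self _) hd
    rw [abs_of_nonneg (by linarith)]
    exact phim_diff_le hδ h hw h2
  · have h1 : Phim u ≤ Phim w := phim_anti h (lt_of_le_of_lt hu (by norm_num))
    have h2 : u - w ≤ δ := le_trans (le_abs_self _) hd
    rw [abs_sub_comm, abs_of_nonneg (by linarith)]
    exact phim_diff_le hδ h hu h2

theorem stmt_19 (ε E : ℝ) (hε : 0 ≤ ε) (hE : 0 ≤ E)
    (x rb : ℝ) (hrb : rb < x) (hx : x < 0)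
    (hk : x + Phim (rb - x) - Phim rb ≤ -1)
    (atil btil : ℝ)
    (ha : |atil - Phim (rb - x)| ≤ ε)
    (hb : |btil - Phim rb| ≤ ε)
    (hktil : x + atil - btil ≤ -1)
    (v : ℝ) (hv : |v - Phim (x + atil - btil)| ≤ E) :
    |Phim x - (btil + v)| ≤ ε + (Phim (-1 - 2 * ε) - Phim (-1)) + E := by
  set k := x + Phim (rb - x) - Phim rb with hkdef
  set kt := x + atil - btil with hktdef
  have hid : Phim k = Phim x - Phim rb := phim_cotrans hrb hx
  have hkk : |k - kt| ≤ 2 * ε := by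
    have h1 : k - kt = (btil - Phim rb) - (atil - Phim (rb - x)) := by
      rw [hkdef, hktdef]; ring
    rw [h1]
    calc |(btil - Phim rb) - (atil - Phim (rb - x))|
        ≤ |btil - Phim rb| + |atil - Phim (rb - x)| := abs_sub _ _
      _ ≤ 2 * ε := by linarith
  have hmid : |Phim k - Phim kt| ≤ Phim (-1 - 2 * ε) - Phim (-1) :=
    phim_abs_diff (by linarith) hk hktil hkk
  have heq : Phim x - (btil + v)
      = (Phim rb - btil) + (Phim k - Phim kt) + (Phim kt - v) := by
    rw [hid]; ring
  rw [heq]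
  calc |(Phim rb - btil) + (Phim k - Phim kt) + (Phim kt - v)|
      ≤ |(Phim rb - btil) + (Phim k - Phim kt)| + |Phim kt - v| := abs_add_le _ _
    _ ≤ |Phim rb - btil| + |Phim k - Phim kt| + |Phim kt - v| := by
        linarith [abs_add_le (Phim rb - btil) (Phim k - Phim kt)]
    _ ≤ ε + (Phim (-1 - 2 * ε) - Phim (-1)) + E := by
        rw [abs_sub_comm (Phim rb) btil, abs_sub_comm (Phim kt) v]
        linarith
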